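/- Let m, k ∈ ℕ with k ≥ 2 and let Φ = {φ_i(x) = 3^{-m} x + d_i}_{i=1}^k where d_1 = 0, each d_i = Σ_{n≥1} u_{i,n} 3^{-n} with u_{i,n} ∈ {0,2,−2}. Suppose there is a finite nonempty set M ⊂ ℕ such that: (i) distinct elements of M are incongruent mod m; (ii) for each n ∈ M, the column (u_{1,n},…,u_{k,n}) has all entries in {0,2} with at least one equal to 2 (positive), or all entries in {0,−2} with at least one equal to −2 (negative); (iii) for n ∉ M, u_{i,n} = 0 for all i. Let a = Σ_{n≥1} a_n 3^{-n} with a_n ∈ {0,2} such that for every n ∈ M and every integer t ≥ 0: a_{n+mt} = 0 if column n is positive, and a_{n+mt} = 2 if column n is negative. Then a + F_Φ ⊆ C, where F_Φ is the attractor of Φ and C is the middle-third Cantor set. -/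
import Mathlib

lemma aux_abs_summable (c r : ℝ) (hr0 : 0 ≤ r) (hr1 : r < 1) (f : ℕ → ℝ)
    (h : ∀ n, |f n| ≤ c * r ^ n) : Summable fun n => |f n| :=
  Summable.of_nonneg_of_le (fun n => abs_nonneg _) h
    ((summable_geometric_of_lt_one hr0 hr1).mul_left c)

lemma aux_summable_of_bound (c r : ℝ) (hr0 : 0 ≤ r) (hr1 : r < 1) (f : ℕ → ℝ)
    (h : ∀ n, |f n| ≤ c * r ^ n) : Summable f :=
  (aux_abs_summable c r hr0 hr1 f h).of_abs

lemma aux_summable_digits (c : ℝ) (g : ℕ → ℝ) (h : ∀ n, |g n| ≤ c) :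
    Summable (fun n => g n / 3 ^ (n + 1)) := by
  have hc : 0 ≤ c := le_trans (abs_nonneg _) (h 0)
  apply aux_summable_of_bound c (3⁻¹ : ℝ) (by norm_num) (by norm_num)
  intro n
  have hh : c * (3⁻¹:ℝ) ^ n = c / 3 ^ n := by
    rw [inv_pow, div_eq_mul_inv]
  rw [hh, abs_div, abs_of_pos (by positivity : (0:ℝ) < 3 ^ (n+1))]
  exact div_le_div₀ hc (h n) (by positivity)
    (pow_le_pow_right₀ (by norm_num) (Nat.le_succ n))

/-- The middle-third Cantor set. -/
def cantorC : Set ℝ :=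
  {x | ∃ ε : ℕ → ℝ, (∀ n, ε n = 0 ∨ ε n = 2) ∧ x = ∑' n : ℕ, ε n / 3 ^ (n + 1)}

/-- The column (u i n)_i is positive: all entries in {0,2}, at least one equal to 2. -/
def posCol (k : ℕ) (u : Fin k → ℕ → ℝ) (n : ℕ) : Prop :=
  (∀ i, u i n = 0 ∨ u i n = 2) ∧ ∃ i, u i n = 2

/-- The column (u i n)_i is negative: all entries in {0,-2}, at least one equal to -2. -/
def negCol (k : ℕ) (u : Fin k → ℕ → ℝ) (n : ℕ) : Prop :=
  (∀ i, u i n = 0 ∨ u i n = -2) ∧ ∃ i, u i n = -2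

theorem stmt_12 (m k : ℕ) (hm : 1 ≤ m) (hk : 2 ≤ k)
    (u : Fin k → ℕ → ℝ)
    (hu : ∀ i n, u i n = 0 ∨ u i n = 2 ∨ u i n = -2)
    (hu0 : ∀ n, u ⟨0, by omega⟩ n = 0)
    (d : Fin k → ℝ) (hd : ∀ i, d i = ∑' n : ℕ, u i n / 3 ^ (n + 1))
    (M : Finset ℕ) (hMne : M.Nonempty)
    (hM1 : ∀ n ∈ M, ∀ n' ∈ M, n % m = n' % m → n = n')
    (hM2 : ∀ n ∈ M, posCol k u n ∨ negCol k u n)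
    (hM3 : ∀ n ∉ M, ∀ i, u i n = 0)
    (a : ℕ → ℝ) (ha : ∀ n, a n = 0 ∨ a n = 2)
    (hM4 : ∀ n ∈ M, ∀ t : ℕ,
      (posCol k u n → a (n + m * t) = 0) ∧ (negCol k u n → a (n + m * t) = 2))
    (F : Set ℝ) (hFne : F.Nonempty) (hFc : IsCompact F)
    (hattr : F = ⋃ i, (fun x => x / 3 ^ m + d i) '' F) :
    ∀ x ∈ F, (∑' n : ℕ, a n / 3 ^ (n + 1)) + x ∈ cantorC := by
  classical
  have h3mpos : (0:ℝ) < 3 ^ m := by positivity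
  have hrlt : ((3:ℝ) ^ m)⁻¹ < 1 := by
    rw [inv_lt_one_iff₀]
    right
    exact one_lt_pow₀ (by norm_num) (by omega)
  have hr0 : (0:ℝ) ≤ ((3:ℝ) ^ m)⁻¹ := by positivity
  have hdM : ∀ i, d i = ∑ n ∈ M, u i n / 3 ^ (n + 1) := by
    intro i
    rw [hd i]
    exact tsum_eq_sum (fun n hn => by rw [hM3 n hn i, zero_div])
  have huB : ∀ i n, |u i n| ≤ 2 := by
    intro i n; rcases hu i n with h|h|h <;> rw [h] <;> norm_num
  obtain ⟨D, hD0, hDd⟩ : ∃ D, 0 ≤ D ∧ ∀ i, |d i| ≤ D := by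
    refine ⟨∑ i, |d i|, Finset.sum_nonneg (fun _ _ => abs_nonneg _),
      fun i => Finset.single_le_sum (f := fun j => |d j|) (fun _ _ => abs_nonneg _)
        (Finset.mem_univ i)⟩
  intro x hx
  -- expansion map
  have key : ∀ y ∈ F, ∃ i : Fin k, ∃ z ∈ F, y = z / 3 ^ m + d i := by
    intro y hy
    rw [hattr] at hy
    simp only [Set.mem_iUnion, Set.mem_image] at hy
    obtain ⟨i, z, hz, he⟩ := hy
    exact ⟨i, z, hz, he.symm⟩
  have key' : ∀ y : ℝ, ∃ i : Fin k, ∃ z : ℝ, y ∈ F → (z ∈ F ∧ y = z / 3 ^ m + d i) := by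
    intro y
    by_cases hy : y ∈ F
    · obtain ⟨i, z, hz, he⟩ := key y hy
      exact ⟨i, z, fun _ => ⟨hz, he⟩⟩
    · exact ⟨⟨0, by omega⟩, 0, fun h => absurd h hy⟩
  choose I Y hIY using key'
  have hYF : ∀ y ∈ F, Y y ∈ F := fun y hy => (hIY y hy).1
  have hEq : ∀ y ∈ F, y = Y y / 3 ^ m + d (I y) := fun y hy => (hIY y hy).2
  set seq : ℕ → ℝ := fun t => Y^[t] x with hseq
  have hseqF : ∀ t, seq t ∈ F := by
    intro t
    induction t with
    | zero => simpa [hseq] using hx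
    | succ t ih =>
      rw [hseq]
      simp only [Function.iterate_succ_apply']
      exact hYF _ ih
  set idx : ℕ → Fin k := fun t => I (seq t) with hidx
  have hstep : ∀ t, seq t = seq (t+1) / 3 ^ m + d (idx t) := by
    intro t
    have h := hEq _ (hseqF t)
    rw [hidx]
    simp only [hseq, Function.iterate_succ_apply'] at h ⊢
    exact h
  have hpart : ∀ N, x = (∑ t ∈ Finset.range N, d (idx t) / ((3:ℝ)^m)^t) + seq N / ((3:ℝ)^m)^N := by
    intro N
    induction N with
    | zero => simp [hseq]
    | succ N ih =>
      rw [ih, Finset.sum_range_succ, hstep N]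
      have hne : ((3:ℝ)^m)^N ≠ 0 := by positivity
      have hne2 : ((3:ℝ)^m) ≠ 0 := by positivity
      field_simp
      ring
  obtain ⟨Cb, hCb⟩ : ∃ Cb, ∀ y ∈ F, ‖y‖ ≤ Cb :=
    isBounded_iff_forall_norm_le.mp hFc.isBounded
  have hCb0 : 0 ≤ Cb := le_trans (norm_nonneg _) (hCb x hx)
  have habs : Summable fun t => ‖d (idx t) / ((3:ℝ)^m)^t‖ := by
    apply aux_abs_summable D (((3:ℝ)^m)⁻¹) hr0 hrlt
    intro t
    have hh : D * (((3:ℝ)^m)⁻¹) ^ t = D / ((3:ℝ)^m)^t := by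
      rw [inv_pow, div_eq_mul_inv]
    rw [hh, abs_div, abs_of_pos (by positivity : (0:ℝ) < ((3:ℝ)^m)^t)]
    exact div_le_div₀ hD0 (hDd _) (by positivity) le_rfl
  have hx_sum : HasSum (fun t => d (idx t) / ((3:ℝ)^m)^t) x := by
    rw [hasSum_iff_tendsto_nat_of_summable_norm habs]
    have h0 : Filter.Tendsto (fun N => seq N / ((3:ℝ)^m)^N) Filter.atTop (nhds 0) := by
      have hbnd : ∀ N, ‖seq N / ((3:ℝ)^m)^N‖ ≤ Cb * (((3:ℝ)^m)⁻¹)^N := by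
        intro N
        have hh : Cb * (((3:ℝ)^m)⁻¹) ^ N = Cb / ((3:ℝ)^m)^N := by
          rw [inv_pow, div_eq_mul_inv]
        rw [Real.norm_eq_abs, hh, abs_div, abs_of_pos (by positivity : (0:ℝ) < ((3:ℝ)^m)^N)]
        exact div_le_div₀ hCb0 (by simpa [Real.norm_eq_abs] using hCb _ (hseqF N))
          (by positivity) le_rfl
      exact squeeze_zero_norm hbnd
        (by simpa using (tendsto_pow_atTop_nhds_zero_of_lt_one hr0 hrlt).const_mul Cb)
    have := Filter.Tendsto.sub (tendsto_const_nhds (x := x) (f := Filter.atTop)) h0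
    rw [sub_zero] at this
    refine this.congr (fun N => ?_)
    rw [hpart N]
    ring
  have hx_eq : x = ∑' t, d (idx t) / ((3:ℝ)^m)^t := hx_sum.tsum_eq.symm
  -- unique decomposition
  have uniq : ∀ p q : ↥M × ℕ, (p.1 : ℕ) + m * p.2 = (q.1 : ℕ) + m * q.2 → p = q := by
    rintro ⟨⟨n1, h1⟩, t1⟩ ⟨⟨n2, h2⟩, t2⟩ hpq
    simp only at hpq
    have hmod : n1 % m = n2 % m := by
      have e1 : (n1 + m * t1) % m = n1 % m := by
        conv_lhs => rw [mul_comm]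
        exact Nat.add_mul_mod_self_right ..
      have e2 : (n2 + m * t2) % m = n2 % m := by
        conv_lhs => rw [mul_comm]
        exact Nat.add_mul_mod_self_right ..
      rw [← e1, ← e2, hpq]
    have hn : n1 = n2 := hM1 n1 h1 n2 h2 hmod
    subst hn
    have ht : t1 = t2 := by
      have : m * t1 = m * t2 := by omega
      exact Nat.eq_of_mul_eq_mul_left (by omega) this
    subst ht
    rfl
  set f : ↥M × ℕ → ℕ := fun p => (p.1 : ℕ) + m * p.2 with hfdef
  have finj : Function.Injective f := fun p q h => uniq p q h
  set δ : ℕ → ℝ := fun n =>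
      if h : ∃ p : ↥M × ℕ, f p = n then u (idx h.choose.2) (h.choose.1 : ℕ) else 0
    with hδdef
  have hδ : ∀ p : ↥M × ℕ, δ (f p) = u (idx p.2) (p.1 : ℕ) := by
    intro p
    have hex : ∃ q : ↥M × ℕ, f q = f p := ⟨p, rfl⟩
    rw [hδdef]
    simp only
    rw [dif_pos hex]
    have hcp : hex.choose = p := uniq _ _ hex.choose_spec
    rw [hcp]
  have hδ0 : ∀ n, n ∉ Set.range f → δ n = 0 := by
    intro n hn
    rw [hδdef]
    simp only
    rw [dif_neg]
    rintro ⟨p, hp⟩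
    exact hn ⟨p, hp⟩
  have hδB : ∀ n, |δ n| ≤ 2 := by
    intro n
    by_cases h : ∃ p : ↥M × ℕ, f p = n
    · obtain ⟨p, rfl⟩ := h
      rw [hδ p]
      exact huB _ _
    · rw [hδ0 n (fun ⟨p, hp⟩ => h ⟨p, hp⟩)]
      norm_num
  set ε : ℕ → ℝ := fun n => a n + δ n with hεdef
  have hεv : ∀ n, ε n = 0 ∨ ε n = 2 := by
    intro n
    by_cases h : ∃ p : ↥M × ℕ, f p = n
    · obtain ⟨⟨⟨n', hn'⟩, t⟩, rfl⟩ := h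
      have hδn := hδ ⟨⟨n', hn'⟩, t⟩
      have hfp : f (⟨⟨n', hn'⟩, t⟩ : ↥M × ℕ) = n' + m * t := rfl
      rw [hεdef]
      simp only
      rw [hδn, hfp]
      simp only
      rcases hM2 n' hn' with hpos | hneg
      · have ha0 : a (n' + m * t) = 0 := (hM4 n' hn' t).1 hpos
        rcases hpos.1 (idx t) with h0 | h2
        · left; rw [ha0, h0]; ring
        · right; rw [ha0, h2]; ring
      · have ha2 : a (n' + m * t) = 2 := (hM4 n' hn' t).2 hneg
        rcases hneg.1 (idx t) with h0 | h2
        · right; rw [ha2, h0]; ring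
        · left; rw [ha2, h2]; ring
    · have hz : δ n = 0 := hδ0 n (fun ⟨p, hp⟩ => h ⟨p, hp⟩)
      rw [hεdef]
      simp only
      rw [hz, add_zero]
      exact ha n
  have hSa : Summable (fun n => a n / 3 ^ (n + 1)) :=
    aux_summable_digits 2 a (fun n => by rcases ha n with h|h <;> rw [h] <;> norm_num)
  have hSδ : Summable (fun n => δ n / 3 ^ (n + 1)) := aux_summable_digits 2 δ hδB
  have hSinner : ∀ n ∈ M, Summable (fun t => u (idx t) n / 3 ^ (n + 1) / ((3:ℝ)^m)^t) := by
    intro n _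
    apply aux_summable_of_bound (2 / 3 ^ (n + 1)) (((3:ℝ)^m)⁻¹) hr0 hrlt
    intro t
    have hh : 2 / (3:ℝ) ^ (n+1) * (((3:ℝ)^m)⁻¹) ^ t = 2 / 3 ^ (n+1) / ((3:ℝ)^m)^t := by
      rw [inv_pow]; ring
    rw [hh]
    rw [abs_div, abs_of_pos (by positivity : (0:ℝ) < ((3:ℝ)^m)^t)]
    refine div_le_div₀ (by positivity) ?_ (by positivity) le_rfl
    rw [abs_div, abs_of_pos (by positivity : (0:ℝ) < (3:ℝ)^(n+1))]
    exact div_le_div₀ (by norm_num) (huB _ _) (by positivity) le_rfl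
  -- the key identity
  have h2 : ∀ p : ↥M × ℕ,
      δ (f p) / 3 ^ (f p + 1) = u (idx p.2) (p.1 : ℕ) / 3 ^ ((p.1 : ℕ) + 1) / ((3:ℝ)^m)^p.2 := by
    intro p
    rw [hδ p]
    have hpow : (3:ℝ) ^ (f p + 1) = 3 ^ ((p.1 : ℕ) + 1) * ((3:ℝ)^m)^p.2 := by
      rw [← pow_mul, ← pow_add]
      congr 1
      show f p + 1 = (p.1 : ℕ) + 1 + m * p.2
      rw [hfdef]
      ring
    rw [hpow, ← div_div]
  have hL : ∑' n, δ n / 3 ^ (n + 1)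
      = ∑ n ∈ M, ∑' t, u (idx t) n / 3 ^ (n + 1) / ((3:ℝ)^m)^t := by
    have hsupp : Function.support (fun n => δ n / 3 ^ (n + 1)) ⊆ Set.range f := by
      intro n hn
      simp only [Function.mem_support] at hn
      by_contra hr
      exact hn (by rw [hδ0 n hr, zero_div])
    rw [← finj.tsum_eq hsupp]
    have hsumP : Summable (fun p : ↥M × ℕ => δ (f p) / 3 ^ (f p + 1)) :=
      hSδ.comp_injective finj
    rw [Summable.tsum_prod hsumP]
    rw [tsum_fintype]
    rw [Finset.univ_eq_attach, ← Finset.sum_attach M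
      (fun n => ∑' t, u (idx t) n / 3 ^ (n + 1) / ((3:ℝ)^m)^t)]
    refine Finset.sum_congr rfl (fun n' _ => ?_)
    exact tsum_congr (fun t => h2 ⟨n', t⟩)
  have hR : ∑' t, d (idx t) / ((3:ℝ)^m)^t
      = ∑ n ∈ M, ∑' t, u (idx t) n / 3 ^ (n + 1) / ((3:ℝ)^m)^t := by
    calc ∑' t, d (idx t) / ((3:ℝ)^m)^t
        = ∑' t, ∑ n ∈ M, u (idx t) n / 3 ^ (n + 1) / ((3:ℝ)^m)^t :=
          tsum_congr (fun t => by rw [hdM, Finset.sum_div])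
      _ = ∑ n ∈ M, ∑' t, u (idx t) n / 3 ^ (n + 1) / ((3:ℝ)^m)^t :=
          Summable.tsum_finsetSum (fun n hn => hSinner n hn)
  have hxδ : x = ∑' n, δ n / 3 ^ (n + 1) := by
    rw [hx_eq, hR, ← hL]
  refine ⟨ε, hεv, ?_⟩
  have hsplit : ∑' n, ε n / 3 ^ (n + 1)
      = (∑' n : ℕ, a n / 3 ^ (n + 1)) + ∑' n, δ n / 3 ^ (n + 1) := by
    rw [← Summable.tsum_add hSa hSδ]
    exact tsum_congr (fun n => by rw [hεdef]; simp only; rw [add_div])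
  rw [hsplit, ← hxδ]
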